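/- Theorem 8.1 (monotonicity of under-approximations): for deterministic APAs N1, N2 in SVNF with N1 ⋠ N2, and any K ∈ ℕ, the under-approximating difference satisfies N1 ∖^K N2 ⪯ N1 ∖^{K+1} N2; the witnessing refinement relation is the identity on common states together with the pairs ((s0^1,s0^2,e,K),(s0^1,s0^2,e,K+1)) for e ∈ B(s0^1,s0^2). -/
import Mathlib


/-- Three-valued modality for APA transition functions. -/
inductive Modality
  | bot | may | top
  deriving DecidableEq

/-- μ is simulated by μ' w.r.t. relation R and correspondence function δ. -/
def Simulates {S S' : Type*} [Fintype S] [Fintype S'] (R : Set (S × S'))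
    (μ : S → ℝ) (μ' : S' → ℝ) (δ : S → S' → ℝ) : Prop :=
  (∀ s, 0 < μ s → (∀ s', 0 ≤ δ s s') ∧ ∑ s', δ s s' = 1) ∧
  (∀ s', ∑ s, μ s * δ s s' = μ' s') ∧
  (∀ s s', 0 < δ s s' → (s, s') ∈ R)

/-- μ ⊑_R μ'. -/
def Simulated {S S' : Type*} [Fintype S] [Fintype S'] (R : Set (S × S'))
    (μ : S → ℝ) (μ' : S' → ℝ) : Prop :=
  ∃ δ, Simulates R μ μ' δ

/-- An abstract probabilistic automaton; a constraint is identified with its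
satisfaction set `Sat(φ) ⊆ Dist(S)`. -/
structure APA (S A AP : Type*) where
  L : S → A → Set (S → ℝ) → Modality
  V : S → Set (Set AP)
  init : Set S

/-- Refinement relation between two APAs. -/
def IsRefinement {S1 S2 A AP : Type*} [Fintype S1] [Fintype S2]
    (N1 : APA S1 A AP) (N2 : APA S2 A AP) (R : Set (S1 × S2)) : Prop :=
  ∀ p ∈ R,
    N1.V p.1 ⊆ N2.V p.2 ∧
    (∀ a φ2, N2.L p.2 a φ2 = Modality.top →
      ∃ φ1, N1.L p.1 a φ1 = Modality.top ∧
        ∀ μ1 ∈ φ1, ∃ μ2 ∈ φ2, Simulated R μ1 μ2) ∧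
    (∀ a φ1, N1.L p.1 a φ1 ≠ Modality.bot →
      ∃ φ2, N2.L p.2 a φ2 ≠ Modality.bot ∧
        ∀ μ1 ∈ φ1, ∃ μ2 ∈ φ2, Simulated R μ1 μ2)

/-- N1 ⪯ N2. -/
def Refines {S1 S2 A AP : Type*} [Fintype S1] [Fintype S2]
    (N1 : APA S1 A AP) (N2 : APA S2 A AP) : Prop :=
  ∃ R, IsRefinement N1 N2 R ∧ ∀ s1 ∈ N1.init, ∃ s2 ∈ N2.init, (s1, s2) ∈ R

/-- Single valuation normal form: each state has at most one admissible valuation. -/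
def SVNF {S A AP : Type*} (N : APA S A AP) : Prop :=
  ∀ s, (N.V s).Subsingleton

/-- Deterministic APA: at most one outgoing constraint per action, no two distinct
reachable successors of a transition with overlapping valuations, and a single
initial state. -/
def Deterministic {S A AP : Type*} (N : APA S A AP) : Prop :=
  (∀ s a φ φ', N.L s a φ ≠ Modality.bot → N.L s a φ' ≠ Modality.bot → φ = φ') ∧
  (∀ s a φ, N.L s a φ ≠ Modality.bot → ∀ μ ∈ φ, ∀ μ' ∈ φ, ∀ s' s'',
      0 < μ s' → 0 < μ' s'' → (N.V s' ∩ N.V s'').Nonempty → s' = s'') ∧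
  (∃ s0, N.init = {s0})

attribute [local instance] Classical.propDecidable

/-- The maximal refinement relation between N1 and N2 (union of all refinement
relations). -/
def MaxRef {S1 S2 A AP : Type*} [Fintype S1] [Fintype S2]
    (N1 : APA S1 A AP) (N2 : APA S2 A AP) : Set (S1 × S2) :=
  ⋃₀ {R | IsRefinement N1 N2 R}

section Bsets
variable {S1 S2 A AP : Type*} [Fintype S1] [Fintype S2]
variable (N1 : APA S1 A AP) (N2 : APA S2 A AP)

/-- Case 3.a. -/
def Ba (s1 : S1) (s2 : S2) : Set A :=
  {e | ∃ φ1, N1.L s1 e φ1 = Modality.top ∧ ∀ φ2, N2.L s2 e φ2 = Modality.bot}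

/-- Case 3.b. -/
def Bb (s1 : S1) (s2 : S2) : Set A :=
  {e | ∃ φ1, N1.L s1 e φ1 = Modality.may ∧ ∀ φ2, N2.L s2 e φ2 = Modality.bot}

/-- Case 3.c. -/
def Bc (s1 : S1) (s2 : S2) : Set A :=
  {e | ∃ φ1, N1.L s1 e φ1 ≠ Modality.bot ∧ ∃ φ2, N2.L s2 e φ2 = Modality.may ∧
    ∃ μ ∈ φ1, ∀ μ' ∈ φ2, ¬ Simulated (MaxRef N1 N2) μ μ'}

/-- Case 3.d. -/
def Bd (s1 : S1) (s2 : S2) : Set A :=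
  {e | ∃ φ2, N2.L s2 e φ2 = Modality.top ∧ ∀ φ1, N1.L s1 e φ1 = Modality.bot}

/-- Case 3.e. -/
def Be (s1 : S1) (s2 : S2) : Set A :=
  {e | ∃ φ2, N2.L s2 e φ2 = Modality.top ∧ ∃ φ1, N1.L s1 e φ1 = Modality.may}

/-- Case 3.f. -/
def Bf (s1 : S1) (s2 : S2) : Set A :=
  {e | ∃ φ2, N2.L s2 e φ2 = Modality.top ∧ ∃ φ1, N1.L s1 e φ1 = Modality.top ∧
    ∃ μ ∈ φ1, ∀ μ' ∈ φ2, ¬ Simulated (MaxRef N1 N2) μ μ'}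

/-- B(s1,s2): all actions by which refinement is broken at (s1,s2). -/
def Bset (s1 : S1) (s2 : S2) : Set A :=
  Ba N1 N2 s1 s2 ∪ Bb N1 N2 s1 s2 ∪ Bc N1 N2 s1 s2 ∪ Bd N1 N2 s1 s2 ∪
    Be N1 N2 s1 s2 ∪ Bf N1 N2 s1 s2

/-- Potential e-successors of s2 with valuation v. -/
def Succ (s2 : S2) (e : A) (v : Set (Set AP)) : Set S2 :=
  {s' | N2.V s' = v ∧ ∃ φ, N2.L s2 e φ ≠ Modality.bot ∧ ∃ μ ∈ φ, 0 < μ s'}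

end Bsets

/-- State space of the under-approximating difference N1 ∖^K N2:
S1 × (S2 ∪ {⊥}) × (A ∪ {ε}) × {1,…,K}, with ⊥ and ε encoded by `none` and
index i : Fin K representing the paper's index i+1. -/
abbrev DState (S1 S2 A : Type*) (K : ℕ) : Type _ :=
  S1 × Option S2 × Option A × Fin K

/-- The constraint φ^⊥ : support only on states (s1,⊥,ε,1), with the projection
to S1 satisfying φ. -/
def liftBot {S1 S2 A : Type*} {K : ℕ} (φ : Set (S1 → ℝ)) :
    Set (DState S1 S2 A K → ℝ) :=
  {μ | (∀ s1 s2o ao, ∀ i : Fin K, (s2o ≠ none ∨ ao ≠ none ∨ (i : ℕ) ≠ 0) →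
          μ (s1, s2o, ao, i) = 0) ∧
       ∀ i : Fin K, (i : ℕ) = 0 → (fun s1 => μ (s1, none, none, i)) ∈ φ}

/-- The constraint φ12^{B,k} of the under-approximation. -/
def phiB {S1 S2 A AP : Type*} [Fintype S1] [Fintype S2] [Fintype A] {K : ℕ}
    (N1 : APA S1 A AP) (N2 : APA S2 A AP)
    (s2 : S2) (e : A) (k : Fin K)
    (φ1 : Set (S1 → ℝ)) (φ2 : Set (S2 → ℝ)) : Set (DState S1 S2 A K → ℝ) :=
  {μ |
    (∀ s1' s2o c, ∀ i : Fin K, 0 < μ (s1', s2o, c, i) →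
      (c = none ∨ ∃ s2' cc, s2o = some s2' ∧ c = some cc ∧
          cc ∈ Bset N1 N2 s1' s2') ∧
      ((Succ N2 s2 e (N1.V s1') = ∅ ∧ s2o = none ∧ (i : ℕ) = 0) ∨
       (∃ s2', s2o = some s2' ∧ s2' ∈ Succ N2 s2 e (N1.V s1')))) ∧
    ((fun s1' => ∑ s2o : Option S2, ∑ c : Option A, ∑ i : Fin K,
        μ (s1', s2o, c, i)) ∈ φ1) ∧
    ((∃ s1' c, ∃ i : Fin K, (i : ℕ) = 0 ∧ 0 < μ (s1', none, c, i)) ∨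
     ((fun s2' => ∑ s1' : S1, ∑ c : Option A, ∑ i : Fin K,
         μ (s1', some s2', c, i)) ∉ φ2) ∨
     ((k : ℕ) ≠ 0 ∧ ∃ s1' s2' cc, ∃ i : Fin K, (i : ℕ) < (k : ℕ) ∧
        0 < μ (s1', some s2', some cc, i)))}

/-- The default transitions: copies of the transitions of N1, pushed onto φ^⊥
constraints. -/
noncomputable def baseL {S1 S2 A AP : Type*} {K : ℕ}
    (N1 : APA S1 A AP) (s1 : S1) (a : A)
    (ψ : Set (DState S1 S2 A K → ℝ)) : Modality :=
  if ∃ φ, N1.L s1 a φ = Modality.top ∧ ψ = liftBot φ then Modality.top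
  else if ∃ φ, N1.L s1 a φ = Modality.may ∧ ψ = liftBot φ then Modality.may
  else Modality.bot

/-- Transition function of N1 ∖^K N2 (Definition 7 / Table 2). -/
noncomputable def underL {S1 S2 A AP : Type*} [Fintype S1] [Fintype S2]
    [Fintype A] (N1 : APA S1 A AP) (N2 : APA S2 A AP) (K : ℕ) :
    DState S1 S2 A K → A → Set (DState S1 S2 A K → ℝ) → Modality :=
  fun st a ψ =>
    match st with
    | (s1, some s2, some e, k) =>
      if (s1, s2) ∈ MaxRef N1 N2 ∨ N1.V s1 ≠ N2.V s2 then baseL N1 s1 a ψ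
      else if e ∈ Ba N1 N2 s1 s2 ∪ Bb N1 N2 s1 s2 then
        (if a = e then
          (if ∃ φ1, N1.L s1 e φ1 ≠ Modality.bot ∧ ψ = liftBot φ1
            then Modality.top else Modality.bot)
         else baseL N1 s1 a ψ)
      else if e ∈ Bd N1 N2 s1 s2 then baseL N1 s1 a ψ
      else if e ∈ Be N1 N2 s1 s2 then
        (if a = e then
          (if ∃ φ1 φ2, N1.L s1 e φ1 ≠ Modality.bot ∧
                N2.L s2 e φ2 ≠ Modality.bot ∧ ψ = phiB N1 N2 s2 e k φ1 φ2
            then Modality.may else Modality.bot)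
         else baseL N1 s1 a ψ)
      else if e ∈ Bc N1 N2 s1 s2 ∪ Bf N1 N2 s1 s2 then
        (if a = e ∧ ∃ φ1 φ2, N1.L s1 e φ1 ≠ Modality.bot ∧
              N2.L s2 e φ2 ≠ Modality.bot ∧ ψ = phiB N1 N2 s2 e k φ1 φ2
          then Modality.top else baseL N1 s1 a ψ)
      else baseL N1 s1 a ψ
    | (s1, _, _, _) => baseL N1 s1 a ψ

/-- The under-approximating difference N1 ∖^K N2. -/
noncomputable def UnderDiff {S1 S2 A AP : Type*} [Fintype S1] [Fintype S2]
    [Fintype A] (N1 : APA S1 A AP) (N2 : APA S2 A AP)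
    (s01 : S1) (s02 : S2) (K : ℕ) : APA (DState S1 S2 A K) A AP where
  L := underL N1 N2 K
  V := fun st => N1.V st.1
  init := {st | ∃ f, ∃ i : Fin K, f ∈ Bset N1 N2 s01 s02 ∧ (i : ℕ) = K - 1 ∧
    st = (s01, some s02, some f, i)}

/-- Identity embedding of the states of N1 ∖^K N2 into those of N1 ∖^{K+1} N2. -/
def embedD {S1 S2 A : Type*} {K : ℕ} :
    DState S1 S2 A K → DState S1 S2 A (K + 1) :=
  fun st => (st.1, st.2.1, st.2.2.1, Fin.castSucc st.2.2.2)

section PushAux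
variable {S1 S2 A : Type*} {K : ℕ}

/-- Pushforward of a distribution along `embedD`. -/
noncomputable def pushD (μ : DState S1 S2 A K → ℝ) : DState S1 S2 A (K + 1) → ℝ :=
  fun st => if h : (st.2.2.2 : ℕ) < K then μ (st.1, st.2.1, st.2.2.1, ⟨st.2.2.2, h⟩) else 0

lemma pushD_lt (μ : DState S1 S2 A K → ℝ) (s1 : S1) (x : Option S2) (y : Option A)
    (j : Fin (K + 1)) (h : (j : ℕ) < K) :
    pushD μ (s1, x, y, j) = μ (s1, x, y, ⟨j, h⟩) := dif_pos h

lemma pushD_not_lt (μ : DState S1 S2 A K → ℝ) (s1 : S1) (x : Option S2) (y : Option A)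
    (j : Fin (K + 1)) (h : ¬ (j : ℕ) < K) :
    pushD μ (s1, x, y, j) = 0 := dif_neg h

lemma pushD_castSucc (μ : DState S1 S2 A K → ℝ) (s1 : S1) (x : Option S2) (y : Option A)
    (i : Fin K) : pushD μ (s1, x, y, Fin.castSucc i) = μ (s1, x, y, i) := by
  simp [pushD, i.isLt]

lemma pushD_embedD (μ : DState S1 S2 A K → ℝ) (st : DState S1 S2 A K) :
    pushD μ (embedD st) = μ st := by
  obtain ⟨s1, x, y, i⟩ := st
  exact pushD_castSucc μ s1 x y i

lemma embedD_injective :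
    Function.Injective (embedD (S1 := S1) (S2 := S2) (A := A) (K := K)) := by
  rintro ⟨a1, a2, a3, a4⟩ ⟨b1, b2, b3, b4⟩ h
  simp only [embedD, Prod.mk.injEq, Fin.castSucc_inj] at h
  simp [h.1, h.2.1, h.2.2.1, h.2.2.2]

lemma sum_pushD (μ : DState S1 S2 A K → ℝ) (s1 : S1) (x : Option S2) (y : Option A) :
    ∑ j : Fin (K + 1), pushD μ (s1, x, y, j) = ∑ i : Fin K, μ (s1, x, y, i) := by
  rw [Fin.sum_univ_castSucc]
  simp [pushD_castSucc, pushD_not_lt μ s1 x y (Fin.last K) (by simp)]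

lemma simulated_pushD {S1 : Type*} [Fintype S1] {S2 A : Type*} [Fintype S2] [Fintype A]
    {K : ℕ} (R : Set (DState S1 S2 A K × DState S1 S2 A (K + 1)))
    (hR : ∀ s, (s, embedD s) ∈ R) (μ : DState S1 S2 A K → ℝ) :
    Simulated R μ (pushD μ) := by
  classical
  refine ⟨fun s s' => if s' = embedD s then 1 else 0, ?_, ?_, ?_⟩
  · intro s _
    refine ⟨fun s' => by positivity, ?_⟩
    simp [Finset.sum_ite_eq' Finset.univ (embedD s) (fun _ => (1 : ℝ))]
  · rintro ⟨s1, x, y, j⟩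
    by_cases h : (j : ℕ) < K
    · have hemb : embedD (s1, x, y, (⟨j, h⟩ : Fin K)) = (s1, x, y, j) := by
        simp [embedD, Fin.ext_iff]
      rw [pushD_lt μ s1 x y j h]
      rw [Finset.sum_eq_single ((s1, x, y, (⟨j, h⟩ : Fin K)) : DState S1 S2 A K)]
      · dsimp only
        rw [if_pos hemb.symm, mul_one]
      · intro b _ hb
        dsimp only
        rw [if_neg, mul_zero]
        intro hc
        exact hb (embedD_injective (hemb.trans hc).symm)
      · simp
    · rw [pushD_not_lt μ s1 x y j h]
      apply Finset.sum_eq_zero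
      intro b _
      dsimp only
      rw [if_neg, mul_zero]
      intro hc
      have h4 := congrArg (fun st : DState S1 S2 A (K + 1) => (st.2.2.2 : ℕ)) hc
      simp only [embedD, Fin.coe_castSucc] at h4
      exact h (by rw [h4]; exact b.2.2.2.isLt)
  · intro s s' hpos
    by_cases h : s' = embedD s
    · subst h; exact hR s
    · simp [h] at hpos

lemma liftBot_pushD (hK : 0 < K) (φ : Set (S1 → ℝ)) (μ : DState S1 S2 A K → ℝ)
    (hμ : μ ∈ liftBot (S2 := S2) (A := A) (K := K) φ) :
    pushD μ ∈ liftBot (S2 := S2) (A := A) (K := K + 1) φ := by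
  constructor
  · intro s1 s2o ao j hcond
    by_cases h : (j : ℕ) < K
    · rw [pushD_lt μ s1 s2o ao j h]
      exact hμ.1 s1 s2o ao ⟨j, h⟩ hcond
    · exact pushD_not_lt μ s1 s2o ao j h
  · intro j hj
    have h : (j : ℕ) < K := hj ▸ hK
    have : (fun s1 => pushD μ (s1, none, none, j)) =
        (fun s1 => μ (s1, none, none, ⟨j, h⟩)) := by
      funext s1; exact pushD_lt μ s1 none none j h
    rw [this]
    exact hμ.2 ⟨j, h⟩ hj

end PushAux

section MatchAux
variable {S1 S2 A AP : Type*} [Fintype S1] [Fintype S2] [Fintype A] {K : ℕ}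

lemma phiB_pushD (N1 : APA S1 A AP) (N2 : APA S2 A AP) (s2 : S2) (e : A)
    (k : Fin K) (k' : Fin (K + 1)) (hkk : (k : ℕ) ≤ (k' : ℕ))
    (φ1 : Set (S1 → ℝ)) (φ2 : Set (S2 → ℝ)) (μ : DState S1 S2 A K → ℝ)
    (hμ : μ ∈ phiB N1 N2 s2 e k φ1 φ2) :
    pushD μ ∈ phiB N1 N2 s2 e k' φ1 φ2 := by
  obtain ⟨h1, h2, h3⟩ := hμ
  refine ⟨?_, ?_, ?_⟩
  · intro s1' s2o c j hpos
    by_cases h : (j : ℕ) < K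
    · rw [pushD_lt μ s1' s2o c j h] at hpos
      exact h1 s1' s2o c ⟨j, h⟩ hpos
    · rw [pushD_not_lt μ s1' s2o c j h] at hpos
      exact absurd hpos (lt_irrefl 0)
  · have heq : (fun s1' => ∑ s2o : Option S2, ∑ c : Option A, ∑ j : Fin (K + 1),
        pushD μ (s1', s2o, c, j)) =
        (fun s1' => ∑ s2o : Option S2, ∑ c : Option A, ∑ i : Fin K,
          μ (s1', s2o, c, i)) := by
      funext s1'
      exact Finset.sum_congr rfl fun s2o _ => Finset.sum_congr rfl fun c _ =>
        sum_pushD μ s1' s2o c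
    rw [heq]
    exact h2
  · rcases h3 with ⟨s1', c, i, hi0, hpos⟩ | hφ | ⟨hk0, s1', s2', cc, i, hik, hpos⟩
    · exact Or.inl ⟨s1', c, Fin.castSucc i, by simpa using hi0,
        by rw [pushD_castSucc]; exact hpos⟩
    · refine Or.inr (Or.inl ?_)
      have heq : (fun s2' => ∑ s1' : S1, ∑ c : Option A, ∑ j : Fin (K + 1),
          pushD μ (s1', some s2', c, j)) =
          (fun s2' => ∑ s1' : S1, ∑ c : Option A, ∑ i : Fin K,
            μ (s1', some s2', c, i)) := by
        funext s2'
        exact Finset.sum_congr rfl fun s1' _ => Finset.sum_congr rfl fun c _ =>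
          sum_pushD μ s1' (some s2') c
      rw [heq]
      exact hφ
    · exact Or.inr (Or.inr ⟨by omega, s1', s2', cc, Fin.castSucc i,
        by simp only [Fin.coe_castSucc]; omega, by rw [pushD_castSucc]; exact hpos⟩)

lemma baseL_match (hK : 0 < K) (N1 : APA S1 A AP) (s1 : S1) (a : A) :
    (∀ ψ2 : Set (DState S1 S2 A (K + 1) → ℝ), baseL N1 s1 a ψ2 = Modality.top →
      ∃ ψ1 : Set (DState S1 S2 A K → ℝ), baseL N1 s1 a ψ1 = Modality.top ∧
        ∀ μ ∈ ψ1, pushD μ ∈ ψ2) ∧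
    (∀ ψ1 : Set (DState S1 S2 A K → ℝ), baseL N1 s1 a ψ1 ≠ Modality.bot →
      ∃ ψ2 : Set (DState S1 S2 A (K + 1) → ℝ), baseL N1 s1 a ψ2 ≠ Modality.bot ∧
        ∀ μ ∈ ψ1, pushD μ ∈ ψ2) := by
  constructor
  · intro ψ2 h
    unfold baseL at h
    split_ifs at h with h1 h2
    · obtain ⟨φ, hφ, rfl⟩ := h1
      refine ⟨liftBot φ, ?_, fun μ hμ => liftBot_pushD hK φ μ hμ⟩
      unfold baseL
      rw [if_pos ⟨φ, hφ, rfl⟩]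
  · intro ψ1 h
    unfold baseL at h
    split_ifs at h with h1 h2
    · obtain ⟨φ, hφ, rfl⟩ := h1
      refine ⟨liftBot φ, ?_, fun μ hμ => liftBot_pushD hK φ μ hμ⟩
      unfold baseL
      rw [if_pos ⟨φ, hφ, rfl⟩]
      simp
    · obtain ⟨φ, hφ, rfl⟩ := h2
      refine ⟨liftBot φ, ?_, fun μ hμ => liftBot_pushD hK φ μ hμ⟩
      unfold baseL
      split_ifs with g1 g2
      · simp
      · simp
      · exact absurd ⟨φ, hφ, rfl⟩ g2
    · exact absurd rfl h

lemma underL_cases (N1 : APA S1 A AP) (N2 : APA S2 A AP) (s1 : S1) (s2 : S2)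
    (e a : A) :
    (∀ K, ∀ k : Fin K, ∀ ψ, underL N1 N2 K (s1, some s2, some e, k) a ψ =
        baseL N1 s1 a ψ) ∨
    (∀ K, ∀ k : Fin K, ∀ ψ, underL N1 N2 K (s1, some s2, some e, k) a ψ =
        if ∃ φ1, N1.L s1 e φ1 ≠ Modality.bot ∧ ψ = liftBot φ1 then Modality.top
        else Modality.bot) ∨
    (∀ K, ∀ k : Fin K, ∀ ψ, underL N1 N2 K (s1, some s2, some e, k) a ψ =
        if ∃ φ1 φ2, N1.L s1 e φ1 ≠ Modality.bot ∧ N2.L s2 e φ2 ≠ Modality.bot ∧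
            ψ = phiB N1 N2 s2 e k φ1 φ2 then Modality.may else Modality.bot) ∨
    (∀ K, ∀ k : Fin K, ∀ ψ, underL N1 N2 K (s1, some s2, some e, k) a ψ =
        if a = e ∧ ∃ φ1 φ2, N1.L s1 e φ1 ≠ Modality.bot ∧
            N2.L s2 e φ2 ≠ Modality.bot ∧ ψ = phiB N1 N2 s2 e k φ1 φ2
          then Modality.top else baseL N1 s1 a ψ) := by
  by_cases h0 : (s1, s2) ∈ MaxRef N1 N2 ∨ N1.V s1 ≠ N2.V s2
  · exact Or.inl fun K k ψ => by simp only [underL]; rw [if_pos h0]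
  by_cases hab : e ∈ Ba N1 N2 s1 s2 ∪ Bb N1 N2 s1 s2
  · by_cases hae : a = e
    · exact Or.inr (Or.inl fun K k ψ => by
        simp only [underL]; rw [if_neg h0, if_pos hab, if_pos hae])
    · exact Or.inl fun K k ψ => by
        simp only [underL]; rw [if_neg h0, if_pos hab, if_neg hae]
  by_cases hd : e ∈ Bd N1 N2 s1 s2
  · exact Or.inl fun K k ψ => by
      simp only [underL]; rw [if_neg h0, if_neg hab, if_pos hd]
  by_cases he : e ∈ Be N1 N2 s1 s2
  · by_cases hae : a = e
    · exact Or.inr (Or.inr (Or.inl fun K k ψ => by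
        simp only [underL]; rw [if_neg h0, if_neg hab, if_neg hd, if_pos he, if_pos hae]))
    · exact Or.inl fun K k ψ => by
        simp only [underL]; rw [if_neg h0, if_neg hab, if_neg hd, if_pos he, if_neg hae]
  by_cases hcf : e ∈ Bc N1 N2 s1 s2 ∪ Bf N1 N2 s1 s2
  · exact Or.inr (Or.inr (Or.inr fun K k ψ => by
      simp only [underL]; rw [if_neg h0, if_neg hab, if_neg hd, if_neg he, if_pos hcf]))
  · exact Or.inl fun K k ψ => by
      simp only [underL]; rw [if_neg h0, if_neg hab, if_neg hd, if_neg he, if_neg hcf]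

lemma underL_match (hK : 0 < K) (N1 : APA S1 A AP) (N2 : APA S2 A AP)
    (s1 : S1) (x : Option S2) (y : Option A) (k : Fin K) (k' : Fin (K + 1))
    (hkk : (k : ℕ) ≤ (k' : ℕ)) (a : A) :
    (∀ ψ2, underL N1 N2 (K + 1) (s1, x, y, k') a ψ2 = Modality.top →
      ∃ ψ1, underL N1 N2 K (s1, x, y, k) a ψ1 = Modality.top ∧
        ∀ μ ∈ ψ1, pushD μ ∈ ψ2) ∧
    (∀ ψ1, underL N1 N2 K (s1, x, y, k) a ψ1 ≠ Modality.bot →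
      ∃ ψ2, underL N1 N2 (K + 1) (s1, x, y, k') a ψ2 ≠ Modality.bot ∧
        ∀ μ ∈ ψ1, pushD μ ∈ ψ2) := by
  have hbase : ∀ (P : Prop), (∀ K', ∀ kk : Fin K', ∀ ψ,
      underL N1 N2 K' (s1, x, y, kk) a ψ = baseL N1 s1 a ψ) →
      (∀ ψ2, underL N1 N2 (K + 1) (s1, x, y, k') a ψ2 = Modality.top →
        ∃ ψ1, underL N1 N2 K (s1, x, y, k) a ψ1 = Modality.top ∧
          ∀ μ ∈ ψ1, pushD μ ∈ ψ2) ∧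
      (∀ ψ1, underL N1 N2 K (s1, x, y, k) a ψ1 ≠ Modality.bot →
        ∃ ψ2, underL N1 N2 (K + 1) (s1, x, y, k') a ψ2 ≠ Modality.bot ∧
          ∀ μ ∈ ψ1, pushD μ ∈ ψ2) := by
    intro _ hc
    constructor
    · intro ψ2 h
      rw [hc] at h
      obtain ⟨ψ1, h1, h2⟩ := (baseL_match hK N1 s1 a).1 ψ2 h
      exact ⟨ψ1, by rw [hc]; exact h1, h2⟩
    · intro ψ1 h
      rw [hc] at h
      obtain ⟨ψ2, h1, h2⟩ := (baseL_match hK N1 s1 a).2 ψ1 h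
      exact ⟨ψ2, by rw [hc]; exact h1, h2⟩
  obtain _ | s2 := x
  · exact hbase True (fun K' kk ψ => by simp only [underL])
  obtain _ | e := y
  · exact hbase True (fun K' kk ψ => by simp only [underL])
  rcases underL_cases N1 N2 s1 s2 e a with hc | hc | hc | hc
  · exact hbase True hc
  · constructor
    · intro ψ2 h
      rw [hc] at h
      split_ifs at h with hE
      · obtain ⟨φ1, hφ1, rfl⟩ := hE
        refine ⟨liftBot φ1, ?_, fun μ hμ => liftBot_pushD hK φ1 μ hμ⟩
        rw [hc]
        rw [if_pos ⟨φ1, hφ1, rfl⟩]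
    · intro ψ1 h
      rw [hc] at h
      split_ifs at h with hE
      · obtain ⟨φ1, hφ1, rfl⟩ := hE
        refine ⟨liftBot φ1, ?_, fun μ hμ => liftBot_pushD hK φ1 μ hμ⟩
        rw [hc, if_pos ⟨φ1, hφ1, rfl⟩]
        simp
      · exact absurd rfl h
  · constructor
    · intro ψ2 h
      rw [hc] at h
      split_ifs at h with hE
    · intro ψ1 h
      rw [hc] at h
      split_ifs at h with hE
      · obtain ⟨φ1, φ2, hφ1, hφ2, rfl⟩ := hE
        refine ⟨phiB N1 N2 s2 e k' φ1 φ2, ?_,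
          fun μ hμ => phiB_pushD N1 N2 s2 e k k' hkk φ1 φ2 μ hμ⟩
        rw [hc, if_pos ⟨φ1, φ2, hφ1, hφ2, rfl⟩]
        simp
      · exact absurd rfl h
  · constructor
    · intro ψ2 h
      rw [hc] at h
      by_cases hE : a = e ∧ ∃ φ1 φ2, N1.L s1 e φ1 ≠ Modality.bot ∧
          N2.L s2 e φ2 ≠ Modality.bot ∧ ψ2 = phiB N1 N2 s2 e k' φ1 φ2
      · obtain ⟨hae, φ1, φ2, hφ1, hφ2, rfl⟩ := hE
        refine ⟨phiB N1 N2 s2 e k φ1 φ2, ?_,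
          fun μ hμ => phiB_pushD N1 N2 s2 e k k' hkk φ1 φ2 μ hμ⟩
        rw [hc, if_pos ⟨hae, φ1, φ2, hφ1, hφ2, rfl⟩]
      · rw [if_neg hE] at h
        obtain ⟨ψ1, h1, h2⟩ := (baseL_match hK N1 s1 a).1 ψ2 h
        refine ⟨ψ1, ?_, h2⟩
        rw [hc]
        split_ifs with g
        · rfl
        · exact h1
    · intro ψ1 h
      rw [hc] at h
      by_cases hE : a = e ∧ ∃ φ1 φ2, N1.L s1 e φ1 ≠ Modality.bot ∧
          N2.L s2 e φ2 ≠ Modality.bot ∧ ψ1 = phiB N1 N2 s2 e k φ1 φ2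
      · obtain ⟨hae, φ1, φ2, hφ1, hφ2, rfl⟩ := hE
        refine ⟨phiB N1 N2 s2 e k' φ1 φ2, ?_,
          fun μ hμ => phiB_pushD N1 N2 s2 e k k' hkk φ1 φ2 μ hμ⟩
        rw [hc, if_pos ⟨hae, φ1, φ2, hφ1, hφ2, rfl⟩]
        simp
      · rw [if_neg hE] at h
        obtain ⟨ψ2, h1, h2⟩ := (baseL_match hK N1 s1 a).2 ψ1 h
        refine ⟨ψ2, ?_, h2⟩
        rw [hc]
        split_ifs with g
        · simp
        · exact h1

end MatchAux
/-- Theorem 8.1: monotonicity of the under-approximations: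
N1 ∖^K N2 ⪯ N1 ∖^{K+1} N2, witnessed by the identity on common states together
with the pairs ((s0^1,s0^2,e,K),(s0^1,s0^2,e,K+1)) for e ∈ B(s0^1,s0^2). -/
theorem under_approx_monotone
    {S1 S2 A AP : Type*} [Fintype S1] [Fintype S2] [Fintype A]
    (N1 : APA S1 A AP) (N2 : APA S2 A AP)
    (hdet1 : Deterministic N1) (hdet2 : Deterministic N2)
    (hsvnf1 : SVNF N1) (hsvnf2 : SVNF N2)
    (s01 : S1) (s02 : S2) (hinit1 : N1.init = {s01}) (hinit2 : N2.init = {s02})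
    (hnot : ¬ Refines N1 N2) (K : ℕ) :
    IsRefinement (UnderDiff N1 N2 s01 s02 K) (UnderDiff N1 N2 s01 s02 (K + 1))
      {pq | pq.2 = embedD pq.1 ∨
        ∃ e, ∃ i : Fin K, ∃ j : Fin (K + 1), e ∈ Bset N1 N2 s01 s02 ∧ (i : ℕ) = K - 1 ∧ (j : ℕ) = K ∧
          pq = ((s01, some s02, some e, i), (s01, some s02, some e, j))} ∧
    (∀ st ∈ (UnderDiff N1 N2 s01 s02 K).init,
      ∃ st' ∈ (UnderDiff N1 N2 s01 s02 (K + 1)).init,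
        (st, st') ∈
          {pq | pq.2 = embedD pq.1 ∨
            ∃ e, ∃ i : Fin K, ∃ j : Fin (K + 1), e ∈ Bset N1 N2 s01 s02 ∧ (i : ℕ) = K - 1 ∧ (j : ℕ) = K ∧
              pq = ((s01, some s02, some e, i), (s01, some s02, some e, j))}) ∧
    Refines (UnderDiff N1 N2 s01 s02 K) (UnderDiff N1 N2 s01 s02 (K + 1)) := by
  set R : Set (DState S1 S2 A K × DState S1 S2 A (K + 1)) :=
    {pq | pq.2 = embedD pq.1 ∨
      ∃ e, ∃ i : Fin K, ∃ j : Fin (K + 1), e ∈ Bset N1 N2 s01 s02 ∧ (i : ℕ) = K - 1 ∧ (j : ℕ) = K ∧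
        pq = ((s01, some s02, some e, i), (s01, some s02, some e, j))} with hRdef
  have hgraph : ∀ s, (s, embedD s) ∈ R := fun s => Or.inl rfl
  have href : IsRefinement (UnderDiff N1 N2 s01 s02 K)
      (UnderDiff N1 N2 s01 s02 (K + 1)) R := by
    rintro ⟨p1, p2⟩ hp
    have hK : 0 < K := p1.2.2.2.pos
    obtain ⟨s1, x, y, k⟩ := p1
    obtain ⟨k', rfl, hkk⟩ : ∃ k' : Fin (K + 1), p2 = (s1, x, y, k') ∧
        (k : ℕ) ≤ (k' : ℕ) := by
      rcases hp with h | ⟨e, i, j, hB, hi, hj, hpq⟩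
      · exact ⟨Fin.castSucc k, h, by simp⟩
      · obtain ⟨h1, h2⟩ := Prod.mk.injEq .. ▸ hpq
        obtain ⟨rfl, rfl, rfl, rfl⟩ := Prod.mk.injEq .. ▸ h1
        refine ⟨j, h2, ?_⟩
        rw [hi, hj]
        omega
    refine ⟨?_, ?_, ?_⟩
    · exact subset_rfl
    · intro a ψ2 h
      obtain ⟨ψ1, h1, h2⟩ :=
        (underL_match hK N1 N2 s1 x y k k' hkk a).1 ψ2 h
      exact ⟨ψ1, h1, fun μ1 hμ1 =>
        ⟨pushD μ1, h2 μ1 hμ1, simulated_pushD R hgraph μ1⟩⟩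
    · intro a ψ1 h
      obtain ⟨ψ2, h1, h2⟩ :=
        (underL_match hK N1 N2 s1 x y k k' hkk a).2 ψ1 h
      exact ⟨ψ2, h1, fun μ1 hμ1 =>
        ⟨pushD μ1, h2 μ1 hμ1, simulated_pushD R hgraph μ1⟩⟩
  have hinit : ∀ st ∈ (UnderDiff N1 N2 s01 s02 K).init,
      ∃ st' ∈ (UnderDiff N1 N2 s01 s02 (K + 1)).init, (st, st') ∈ R := by
    rintro st ⟨f, i, hf, hi, rfl⟩
    refine ⟨(s01, some s02, some f, ⟨K, by omega⟩),
      ⟨f, ⟨K, by omega⟩, hf, by simp, rfl⟩, ?_⟩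
    exact Or.inr ⟨f, i, ⟨K, by omega⟩, hf, hi, by simp, rfl⟩
  exact ⟨href, hinit, ⟨R, href, hinit⟩⟩
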